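/- arXiv:1904.07927 — 2 statements merged into one kernel-verified Lean document; each statement's English description precedes it below -/
import Mathlib

section
/- Let G = ⟨a, b | a²b⁻²ab⁻²a²ba²baba²b = 1⟩ with a left-ordering ≺, and set x = b⁻²a, μ = b⁻²ab⁻²ab⁻¹. If a ≺ 1 and b ≺ 1, then 1 ≺ x and 1 ≺ μ. -/
/-!
Put `x = b⁻²a`, so that the relator becomes the word `a²·x·x·a·b·a²·b·a·b·a²·b`. If `a, b ≺ 1` and
`x ⪯ 1`, each letter of this word is `⪯ 1` and its first one, `a²`, is `≺ 1`. In a left ordering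
`u ≺ 1` and `v ⪯ 1` give `uv ⪯ u ≺ 1`, so reading the word from the left it stays `≺ 1`,
contradicting that it equals `1`. Hence `1 ≺ x`, and `μ = x·x·b⁻¹` is a product of positive elements.
-/

/-- The single relator `a²b⁻²ab⁻²a²ba²baba²b` of the presentation of `π₁(v2503)`,
with `a`, `b` the generators of the free group on two letters. -/
def rel2503 : FreeGroup (Fin 2) :=
  let a : FreeGroup (Fin 2) := FreeGroup.of 0
  let b : FreeGroup (Fin 2) := FreeGroup.of 1
  a ^ 2 * b⁻¹ ^ 2 * a * b⁻¹ ^ 2 * a ^ 2 * b * a ^ 2 * b * a * b * a ^ 2 * b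

/-- The fundamental group of `v2503`: `⟨a, b | a²b⁻²ab⁻²a²ba²baba²b = 1⟩`. -/
abbrev G2503 : Type := PresentedGroup ({rel2503} : Set (FreeGroup (Fin 2)))

/-- The generator `a`. -/
def ga : G2503 := PresentedGroup.of 0
/-- The generator `b`. -/
def gb : G2503 := PresentedGroup.of 1

/-- `x = b⁻²a`. -/
def gx : G2503 := gb⁻¹ ^ 2 * ga
/-- `y = ba²`. -/
def gy : G2503 := gb * ga ^ 2
/-- The homological meridian `μ = b⁻²ab⁻²ab⁻¹`. -/
def gmu : G2503 := gb⁻¹ ^ 2 * ga * gb⁻¹ ^ 2 * ga * gb⁻¹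
/-- The homological longitude `λ = a⁻²b⁻¹a⁻²b`. -/
def glam : G2503 := ga⁻¹ ^ 2 * gb⁻¹ * ga⁻¹ ^ 2 * gb

lemma relator_eq_one :
    ga ^ 2 * gb⁻¹ ^ 2 * ga * gb⁻¹ ^ 2 * ga ^ 2 * gb * ga ^ 2 * gb * ga * gb * ga ^ 2 * gb = 1 := by
  simp only [ga, gb, PresentedGroup.of, ← map_pow, ← map_inv, ← map_mul]
  exact PresentedGroup.one_of_mem (Set.mem_singleton rel2503)

lemma relator_eq_one_in_gx :
    ga ^ 2 * gx * gx * ga * gb * ga ^ 2 * gb * ga * gb * ga ^ 2 * gb = 1 := by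
  rw [← relator_eq_one, gx]
  simp only [sq, mul_assoc]

lemma gmu_eq_gx_mul_gx_mul_gb_inv : gmu = gx * gx * gb⁻¹ := by
  rw [gmu, gx]
  group

lemma one_lt_gx [LinearOrder G2503] [CovariantClass G2503 G2503 (· * ·) (· < ·)]
    (ha : ga < 1) (hb : gb < 1) : 1 < gx := by
  have := mulLeftMono_of_mulLeftStrictMono G2503
  by_contra! hx
  have ha2 : ga ^ 2 < 1 := Left.pow_lt_one_of_lt ha two_ne_zero
  have hword : ga ^ 2 * gx * gx * ga * gb * ga ^ 2 * gb * ga * gb * ga ^ 2 * gb < 1 := by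
    apply_rules [mul_lt_one_of_lt_of_le, le_of_lt]
  exact hword.ne relator_eq_one_in_gx

/-- Given a left-ordering of `π₁(v2503)`, if `a ≺ 1` and `b ≺ 1` then
`1 ≺ x` and `1 ≺ μ`, where `x = b⁻²a` and `μ` is the homological meridian. -/
theorem case_II_signs [LinearOrder G2503] [CovariantClass G2503 G2503 (· * ·) (· < ·)]
    (ha : ga < 1) (hb : gb < 1) : 1 < gx ∧ 1 < gmu := by
  have hx := one_lt_gx ha hb
  refine ⟨hx, ?_⟩
  rw [gmu_eq_gx_mul_gx_mul_gb_inv]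
  exact one_lt_mul' (one_lt_mul' hx hx) (one_lt_inv'.mpr hb)
end

section
/- Let G = ⟨a, b | a²b⁻²ab⁻²a²ba²baba²b = 1⟩, μ = b⁻²ab⁻²ab⁻¹, λ = a⁻²b⁻¹a⁻²b. Then the quotient group G/⟨⟨μ, λ⟩⟩ (the quotient by the normal closure of μ and λ) is isomorphic to ℤ/10ℤ. -/
/-!
Put `x = b⁻²a`. The relation `μ = 1` reads `x² = b`, hence `a = b²x = x⁵`, so the quotient is
cyclic, generated by `x`. Substituting, `λ = 1` becomes `x⁻²⁰ = 1` and the defining relator becomes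
`x⁵⁰ = 1`, so `x¹⁰ = 1`. Conversely `a ↦ 5`, `b ↦ 2` kills the relator, `μ` and `λ` in `ℤ/10`
and sends `x` to the generator `1`.
-/

open Multiplicative

theorem MonoidHom.bijective_of_forall_mem_zpowers {Q : Type*} [Group Q] {n : ℕ}
    (f : Q →* Multiplicative (ZMod n)) {x : Q} (hgen : ∀ q, q ∈ Subgroup.zpowers x)
    (hx : x ^ n = 1) (hfx : f x = ofAdd 1) : Function.Bijective f := by
  have hf_zpow : ∀ k : ℤ, f (x ^ k) = ofAdd (k : ZMod n) := fun k => by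
    rw [map_zpow, hfx, ← ofAdd_zsmul, zsmul_one]
  refine ⟨(injective_iff_map_eq_one f).mpr fun q hq => ?_, fun m => ?_⟩
  · obtain ⟨k, rfl⟩ := Subgroup.mem_zpowers_iff.mp (hgen q)
    rw [hf_zpow, ofAdd_eq_one, ZMod.intCast_zmod_eq_zero_iff_dvd] at hq
    obtain ⟨m, rfl⟩ := hq
    rw [zpow_mul, zpow_natCast, hx, one_zpow]
  · exact ⟨x ^ (m.toAdd.cast : ℤ), by rw [hf_zpow, ZMod.intCast_zmod_cast, ofAdd_toAdd]⟩

section Relations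

variable {H : Type*} [Group H] {a b : H}

theorem sq_eq_of_meridian (hμ : b⁻¹ ^ 2 * a * b⁻¹ ^ 2 * a * b⁻¹ = 1) :
    (b⁻¹ ^ 2 * a) ^ 2 = b := by
  rw [← mul_inv_eq_one, ← hμ, sq (b⁻¹ ^ 2 * a)]
  group

theorem eq_pow_five_of_meridian (hμ : b⁻¹ ^ 2 * a * b⁻¹ ^ 2 * a * b⁻¹ = 1) :
    a = (b⁻¹ ^ 2 * a) ^ 5 := by
  calc a = b ^ 2 * (b⁻¹ ^ 2 * a) := by group
    _ = ((b⁻¹ ^ 2 * a) ^ 2) ^ 2 * (b⁻¹ ^ 2 * a) := by rw [sq_eq_of_meridian hμ]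
    _ = (b⁻¹ ^ 2 * a) ^ 5 := by rw [← pow_mul, ← pow_succ]

theorem pow_ten_eq_one_of_relations
    (hrel : a ^ 2 * b⁻¹ ^ 2 * a * b⁻¹ ^ 2 * a ^ 2 * b * a ^ 2 * b * a * b * a ^ 2 * b = 1)
    (hμ : b⁻¹ ^ 2 * a * b⁻¹ ^ 2 * a * b⁻¹ = 1) (hlam : a⁻¹ ^ 2 * b⁻¹ * a⁻¹ ^ 2 * b = 1) :
    (b⁻¹ ^ 2 * a) ^ 10 = 1 := by
  obtain ⟨x, hx, rfl, rfl⟩ : ∃ x, x = b⁻¹ ^ 2 * a ∧ a = x ^ 5 ∧ b = x ^ 2 :=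
    ⟨_, rfl, eq_pow_five_of_meridian hμ, (sq_eq_of_meridian hμ).symm⟩
  rw [← hx]
  have h20 : x ^ (-20 : ℤ) = 1 := by rw [← hlam]; group
  have h50 : x ^ (50 : ℤ) = 1 := by rw [← hrel]; group
  calc x ^ 10 = x ^ (50 : ℤ) * x ^ (-20 : ℤ) * x ^ (-20 : ℤ) := by group
    _ = 1 := by rw [h20, h50]; group

end Relations

namespace G2503

theorem relator_eq_one :
    ga ^ 2 * gb⁻¹ ^ 2 * ga * gb⁻¹ ^ 2 * ga ^ 2 * gb * ga ^ 2 * gb * ga * gb * ga ^ 2 * gb = 1 :=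
  PresentedGroup.one_of_mem (Set.mem_singleton rel2503)

theorem lift_relator_eq_one : ∀ r ∈ ({rel2503} : Set (FreeGroup (Fin 2))),
    FreeGroup.lift ![ofAdd (5 : ZMod 10), ofAdd 2] r = 1 := by
  rintro r rfl
  simp only [rel2503, map_mul, map_pow, map_inv, FreeGroup.lift_apply_of,
    Matrix.cons_val_zero, Matrix.cons_val_one]
  decide

noncomputable def toZMod10 : G2503 →* Multiplicative (ZMod 10) :=
  PresentedGroup.toGroup lift_relator_eq_one

theorem toZMod10_ga : toZMod10 ga = ofAdd 5 := PresentedGroup.toGroup.of _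

theorem toZMod10_gb : toZMod10 gb = ofAdd 2 := PresentedGroup.toGroup.of _

theorem toZMod10_gmu : toZMod10 gmu = 1 := by
  simp only [gmu, map_mul, map_pow, map_inv, toZMod10_ga, toZMod10_gb]
  decide

theorem toZMod10_glam : toZMod10 glam = 1 := by
  simp only [glam, map_mul, map_pow, map_inv, toZMod10_ga, toZMod10_gb]
  decide

theorem toZMod10_gx : toZMod10 gx = ofAdd 1 := by
  simp only [gx, map_mul, map_pow, map_inv, toZMod10_ga, toZMod10_gb]
  decide

variable {Q : Type*} [Group Q] {φ : G2503 →* Q}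

theorem map_meridian (hμ : φ gmu = 1) :
    (φ gb)⁻¹ ^ 2 * φ ga * (φ gb)⁻¹ ^ 2 * φ ga * (φ gb)⁻¹ = 1 := by
  simpa only [gmu, map_mul, map_pow, map_inv] using hμ

theorem map_gx : φ gx = (φ gb)⁻¹ ^ 2 * φ ga := by
  simp only [gx, map_mul, map_pow, map_inv]

theorem map_longitude (hlam : φ glam = 1) :
    (φ ga)⁻¹ ^ 2 * (φ gb)⁻¹ * (φ ga)⁻¹ ^ 2 * φ gb = 1 := by
  simpa only [glam, map_mul, map_pow, map_inv] using hlam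

theorem map_relator : φ ga ^ 2 * (φ gb)⁻¹ ^ 2 * φ ga * (φ gb)⁻¹ ^ 2 * φ ga ^ 2 * φ gb *
    φ ga ^ 2 * φ gb * φ ga * φ gb * φ ga ^ 2 * φ gb = 1 := by
  simpa only [map_mul, map_pow, map_inv, map_one] using congrArg φ relator_eq_one

theorem map_mem_zpowers_gx (hμ : φ gmu = 1) (w : G2503) : φ w ∈ Subgroup.zpowers (φ gx) := by
  refine PresentedGroup.generated_by _ ((Subgroup.zpowers (φ gx)).comap φ) (fun j => ?_) w
  fin_cases j
  · exact ⟨5, (by rw [map_gx, zpow_ofNat, ← eq_pow_five_of_meridian (map_meridian hμ)] :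
      φ gx ^ (5 : ℤ) = φ ga)⟩
  · exact ⟨2, (by rw [map_gx, zpow_ofNat, sq_eq_of_meridian (map_meridian hμ)] :
      φ gx ^ (2 : ℤ) = φ gb)⟩

theorem map_gx_pow_ten (hμ : φ gmu = 1) (hlam : φ glam = 1) : φ gx ^ 10 = 1 := by
  rw [map_gx]
  exact pow_ten_eq_one_of_relations map_relator (map_meridian hμ) (map_longitude hlam)

end G2503

open G2503

/-- The quotient of `π₁(v2503)` by the normal closure of `{μ, λ}` is isomorphic
to `ℤ/10ℤ`. -/
theorem quotient_peripheral_v2503 :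
    Nonempty ((G2503 ⧸ Subgroup.normalClosure ({gmu, glam} : Set G2503)) ≃*
      Multiplicative (ZMod 10)) := by
  set N := Subgroup.normalClosure ({gmu, glam} : Set G2503)
  have hN : ∀ g ∈ ({gmu, glam} : Set G2503), QuotientGroup.mk' N g = 1 := fun g hg =>
    (QuotientGroup.eq_one_iff g).mpr (Subgroup.subset_normalClosure hg)
  have hμ := hN gmu (by simp)
  have hlam := hN glam (by simp)
  let f := QuotientGroup.lift N toZMod10 <| Subgroup.normalClosure_le_normal <| by
    rintro _ (rfl | rfl)
    exacts [toZMod10_gmu, toZMod10_glam]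
  refine ⟨MulEquiv.ofBijective f <| f.bijective_of_forall_mem_zpowers ?_
    (map_gx_pow_ten hμ hlam) toZMod10_gx⟩
  exact (QuotientGroup.mk'_surjective N).forall.mpr (map_mem_zpowers_gx hμ)
end
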